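/- In a finite monoid satisfying (xy)^ω x = (xy)^ω = y(xy)^ω for all x, y, the identities x^{ω+1} = x^ω, (xy)^ω = (yx)^ω and (xy)^ω = (x^ω y^ω)^ω hold. -/
import Mathlib


/-- `e` is the omega power of `x`: an idempotent positive power of `x`. In a finite
monoid such an `e` exists and is unique for each `x`. -/
def IsOmegaPow {M : Type*} [Monoid M] (x e : M) : Prop :=
  (∃ n : ℕ, 0 < n ∧ x ^ n = e) ∧ e * e = e

private lemma idem_pow {M : Type*} [Monoid M] {e : M} (he : e * e = e) :
    ∀ k : ℕ, 0 < k → e ^ k = e := by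
  intro k hk
  induction k with
  | zero => omega
  | succ k ih =>
    rcases Nat.eq_zero_or_pos k with h0 | h0
    · simp [h0]
    · rw [pow_succ, ih h0, he]

private lemma absorb_pow_left {M : Type*} [Monoid M] {u g : M} (hu : u * g = g) :
    ∀ k : ℕ, u ^ k * g = g := by
  intro k
  induction k with
  | zero => simp
  | succ k ih => rw [pow_succ, mul_assoc, hu, ih]

private lemma absorb_pow_right {M : Type*} [Monoid M] {u g : M} (hu : g * u = g) :
    ∀ k : ℕ, g * u ^ k = g := by
  intro k
  induction k with
  | zero => simp
  | succ k ih => rw [pow_succ, ← mul_assoc, ih, hu]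

private lemma sandwich_pow {M : Type*} [Monoid M] (x y : M) :
    ∀ n : ℕ, (y * x) ^ (n + 1) = y * (x * y) ^ n * x := by
  intro n
  induction n with
  | zero => simp
  | succ n ih =>
    rw [pow_succ, ih, pow_succ]
    simp only [mul_assoc]

/-- In a finite monoid satisfying `(xy)^ω x = (xy)^ω = y (xy)^ω`, the identities
`x^(ω+1) = x^ω` and `(xy)^ω = (yx)^ω` hold; consequently `(xy)^ω = (x^ω y^ω)^ω`. -/
theorem J_identities_of_Gamma_basis {M : Type*} [Monoid M] [Finite M] (ω : M → M)
    (hω : ∀ x : M, IsOmegaPow x (ω x))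
    (h : ∀ x y : M, ω (x * y) * x = ω (x * y) ∧ y * ω (x * y) = ω (x * y)) :
    (∀ x : M, ω x * x = ω x) ∧
    (∀ x y : M, ω (x * y) = ω (y * x)) ∧
    (∀ x y : M, ω (x * y) = ω (ω x * ω y)) := by
  have uniq : ∀ x e : M, IsOmegaPow x e → e = ω x := by
    rintro x e ⟨⟨n, hn, hxn⟩, he⟩
    obtain ⟨⟨m, hm, hxm⟩, hf⟩ := hω x
    calc e = e ^ m := (idem_pow he m hm).symm
    _ = (x ^ n) ^ m := by rw [hxn]
    _ = (x ^ m) ^ n := by rw [← pow_mul, ← pow_mul, Nat.mul_comm]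
    _ = (ω x) ^ n := by rw [hxm]
    _ = ω x := idem_pow hf n hn
  have habs1 : ∀ x : M, ω x * x = ω x := by
    intro x
    have := (h x 1).1
    simpa using this
  have habs2 : ∀ x : M, x * ω x = ω x := by
    intro x
    have := (h 1 x).2
    simpa using this
  have hcomm : ∀ x y : M, ω (x * y) = ω (y * x) := by
    intro x y
    apply uniq
    obtain ⟨⟨n, hn, hxn⟩, he⟩ := hω (x * y)
    refine ⟨⟨n + 1, Nat.succ_pos n, ?_⟩, he⟩
    rw [sandwich_pow, hxn, (h x y).2, (h x y).1]
  refine ⟨habs1, hcomm, ?_⟩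
  intro x y
  set g := ω (x * y) with hg
  set e := ω (ω x * ω y) with hedef
  -- absorption facts for g
  have gx : g * x = g := (h x y).1
  have yg : y * g = g := (h x y).2
  have gy : g * y = g := by rw [hg, hcomm x y]; exact (h y x).1
  have xg : x * g = g := by rw [hg, hcomm x y]; exact (h y x).2
  -- absorption facts for e
  have eωx : e * ω x = e := (h (ω x) (ω y)).1
  have ωxe : ω x * e = e := by rw [hedef, hcomm (ω x) (ω y)]; exact (h (ω y) (ω x)).2
  -- e absorbs x and y on the right
  have ex : e * x = e := by
    calc e * x = e * ω x * x := by rw [eωx]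
    _ = e * (ω x * x) := by rw [mul_assoc]
    _ = e * ω x := by rw [habs1]
    _ = e := eωx
  have eωy : e * ω y = e := by rw [hedef, hcomm (ω x) (ω y)]; exact (h (ω y) (ω x)).1
  have ey : e * y = e := by
    calc e * y = e * ω y * y := by rw [eωy]
    _ = e * (ω y * y) := by rw [mul_assoc]
    _ = e * ω y := by rw [habs1]
    _ = e := eωy
  -- e * g = e
  have exy : e * (x * y) = e := by rw [← mul_assoc, ex, ey]
  obtain ⟨⟨n, hn, hxyn⟩, hgidem⟩ := hω (x * y)
  have eg : e * g = e := by
    rw [hg, ← hxyn]; exact absorb_pow_right exy n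
  -- e * g = g
  obtain ⟨⟨m, hm, hxm⟩, _⟩ := hω x
  obtain ⟨⟨p, hp, hyp⟩, _⟩ := hω y
  have ωxg : ω x * g = g := by rw [← hxm]; exact absorb_pow_left xg m
  have ωyg : ω y * g = g := by rw [← hyp]; exact absorb_pow_left yg p
  have ag : (ω x * ω y) * g = g := by rw [mul_assoc, ωyg, ωxg]
  obtain ⟨⟨k, hk, hak⟩, _⟩ := hω (ω x * ω y)
  have eg' : e * g = g := by
    rw [hedef, ← hak]; exact absorb_pow_left ag k
  rw [← eg, eg']
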